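/- There exists a power series F ∈ ℤ⟦x,y⟧ such that: (i) for every prime p there exists G ∈ ℤ⟦x,y⟧ with F − p·G ∈ ℤ⟦x⟧·ℤ⟦y⟧ (i.e., the class of F in the quotient ℤ⟦x,y⟧/(ℤ⟦x⟧·ℤ⟦y⟧) is divisible by every prime); and (ii) for every prime p and every integer d ≥ p, the reduction modulo p of F(x,y) − F(y,x), viewed as a power series in y with coefficients in 𝔽_p⟮x⟯, has a p,d-sieve with respect to k = 𝔽_p and K = 𝔽_p(x). -/

import Mathlib

noncomputable section

/-- `f(x)·g(y)` as an element of `ℤ⟦x,y⟧`, realized as `(ℤ⟦x⟧)⟦y⟧`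
(inner variable `x`, outer variable `y`). -/
def prodXY (f g : PowerSeries ℤ) : PowerSeries (PowerSeries ℤ) :=
  PowerSeries.mk fun i => (PowerSeries.coeff (R := ℤ) i g) • f

/-- The additive subgroup `ℤ⟦x⟧·ℤ⟦y⟧ ⊆ ℤ⟦x,y⟧` of series of finite rank, i.e. finite sums
`Σ f_i(x)·g_i(y)`. -/
def finiteRank : AddSubgroup (PowerSeries (PowerSeries ℤ)) :=
  AddSubgroup.closure {F | ∃ f g : PowerSeries ℤ, F = prodXY f g}

/-- The swap `F(x,y) ↦ F(y,x)` on `ℤ⟦x,y⟧`. -/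
def swapXY (F : PowerSeries (PowerSeries ℤ)) : PowerSeries (PowerSeries ℤ) :=
  PowerSeries.mk fun i => PowerSeries.mk fun j =>
    PowerSeries.coeff (R := ℤ) i (PowerSeries.coeff (R := PowerSeries ℤ) j F)

/-- A power series `F = Σ f_j yʲ ∈ A⟦y⟧` has an `n,d`-sieve (with respect to a field `K` acting
on `A`) if there is `m ≥ 0` such that `f_{m+ld+i} = 0` for all `0 ≤ l ≤ n`, `1 ≤ i ≤ d−1`, and
the coefficients `f_{m+d}, f_{m+2d}, …, f_{m+nd}` are linearly independent over `K`. -/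
def HasSieve (K A : Type) [Field K] [CommRing A] [Algebra K A] (n d : ℕ)
    (F : PowerSeries A) : Prop :=
  ∃ m : ℕ,
    (∀ l : ℕ, l ≤ n → ∀ i : ℕ, 1 ≤ i → i ≤ d - 1 →
      PowerSeries.coeff (R := A) (m + l * d + i) F = 0) ∧
    LinearIndependent K fun l : Fin n => PowerSeries.coeff (R := A) (m + ((l : ℕ) + 1) * d) F

/-- Reduction of `F ∈ ℤ⟦x,y⟧ = (ℤ⟦x⟧)⟦y⟧` modulo a prime `p`, viewed as a power series in `y`
with coefficients in the field of Laurent series `𝔽_p⸨x⸩`. -/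
def modP (p : ℕ) [Fact p.Prime] :
    PowerSeries (PowerSeries ℤ) →+* PowerSeries (LaurentSeries (ZMod p)) :=
  PowerSeries.map ((HahnSeries.ofPowerSeries ℤ (ZMod p)).comp
    (PowerSeries.map (Int.castRingHom (ZMod p))))

open scoped RatFunc

/-!
`F` is built column by column in `y`. Each pair `(p, d)` gets its own block of columns starting at
`m = 4 ^ (pair p d + 2)`, and column `m + l d` (`1 ≤ l ≤ p ≤ d`) carries `(p - 1)! • u_{p,l}(x)`,
where the `u_{p,l}` are `0/1` series with disjoint, increasingly sparse supports inside
`{3 · 4 ^ s}`. Modulo a positive integer `q` only the columns with `p ≤ q` survive, and these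
finitely many labels make `F - q G` a finite sum `Σ u_{p,l}(x) · Y_{p,l}(y)`. The blocks avoid
`{3 · 4 ^ s}`, so `F(y, x)` vanishes on them and the `p, d`-sieve of `F - F(y, x)` at `m` consists
of `(p - 1)! ≡ -1` times the reductions of `u_{p,1}, …, u_{p,p}`. These are independent over
`𝔽_p[x]`, because far out each support has a point with no other support point nearby, and hence
over `𝔽_p(x)` by localization.
-/

open PowerSeries Finset
open scoped Polynomial

namespace PowerSeries

theorem coeff_polynomial_smul {R : Type*} [CommSemiring R] (g : R[X]) (f : R⟦X⟧) (n : ℕ) :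
    coeff n (g • f) = ∑ x ∈ antidiagonal n, g.coeff x.1 * coeff x.2 f := by
  simp [Algebra.smul_def, coeff_mul, PowerSeries.algebraMap_apply', Polynomial.coeff_coe]

/-- In a relation `∑ gᵢ • vᵢ = 0`, the coefficient at `e + deg gᵢ` (with `D ≥ deg gⱼ` for all `j`)
only sees the leading coefficient of `gᵢ`. -/
theorem linearIndependent_polynomial_of_isolated_coeff {R ι : Type*} [CommRing R]
    [NoZeroDivisors R] [Fintype ι] (v : ι → R⟦X⟧)
    (hv : ∀ i D, ∃ e, coeff e (v i) ≠ 0 ∧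
      ∀ j n, n ≤ e + D → e ≤ n + D → coeff n (v j) ≠ 0 → j = i ∧ n = e) :
    LinearIndependent R[X] v := by
  classical
  rw [Fintype.linearIndependent_iff]
  intro g hg i
  by_contra hgi
  set D := univ.sup fun j => (g j).natDegree
  obtain ⟨e, he, hiso⟩ := hv i D
  have isolated : ∀ j (x : ℕ × ℕ), x.1 + x.2 = e + (g i).natDegree →
      (g j).coeff x.1 * coeff x.2 (v j) ≠ 0 → j = i ∧ x = ((g i).natDegree, e) := by
    rintro j ⟨a, n⟩ hsum hne
    have ha : a ≤ D := (Polynomial.le_natDegree_of_ne_zero (left_ne_zero_of_mul hne)).trans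
      (le_sup (f := fun j => (g j).natDegree) (mem_univ j))
    have hi : (g i).natDegree ≤ D := le_sup (f := fun j => (g j).natDegree) (mem_univ i)
    obtain ⟨rfl, rfl⟩ := hiso j n (by omega) (by omega) (right_ne_zero_of_mul hne)
    exact ⟨rfl, Prod.ext (by simp at hsum ⊢; omega) rfl⟩
  have hcoeff : coeff (e + (g i).natDegree) (∑ j, g j • v j) =
      (g i).leadingCoeff * coeff e (v i) := by
    rw [map_sum, sum_eq_single i, coeff_polynomial_smul, sum_eq_single ((g i).natDegree, e)]
    · rfl
    · exact fun x hx hne => by_contra fun h => hne (isolated i x (mem_antidiagonal.mp hx) h).2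
    · exact fun h => absurd (mem_antidiagonal.mpr (add_comm _ _)) h
    · refine fun j _ hji => ?_
      rw [coeff_polynomial_smul]
      exact sum_eq_zero fun x hx =>
        by_contra fun h => hji (isolated j x (mem_antidiagonal.mp hx) h).1
    · exact fun h => absurd (mem_univ i) h
  rw [hg, map_zero, eq_comm] at hcoeff
  exact mul_ne_zero (Polynomial.leadingCoeff_ne_zero.mpr hgi) he hcoeff

theorem linearIndependent_ratFunc_of_polynomial {K ι : Type*} [Field K] {v : ι → K⟦X⟧}
    (hv : LinearIndependent K[X] v) :
    LinearIndependent (RatFunc K) fun i => HahnSeries.ofPowerSeries ℤ K (v i) := by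
  have : IsScalarTower K[X] K⟦X⟧ (LaurentSeries K) := .of_algebraMap_eq fun _ => rfl
  exact (hv.map' (IsScalarTower.toAlgHom K[X] K⟦X⟧ (LaurentSeries K)).toLinearMap
    (LinearMap.ker_eq_bot.mpr HahnSeries.ofPowerSeries_injective)).localization
      (RatFunc K) (nonZeroDivisors K[X])

end PowerSeries

theorem mk_smul_mem_finiteRank {ι : Type*} (u : ι → ℤ⟦X⟧) (c : ℕ → ℤ)
    (κ : ℕ → ι) (T : Finset ι) (hT : ∀ b, c b ≠ 0 → κ b ∈ T) :
    mk (fun b => c b • u (κ b)) ∈ finiteRank := by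
  classical
  have : mk (fun b => c b • u (κ b)) =
      ∑ k ∈ T, prodXY (u k) (mk fun b => if κ b = k then c b else 0) := by
    ext1 b
    by_cases hb : c b = 0
    · simp [prodXY, hb]
    · simp [prodXY, ite_smul, hT b hb]
  rw [this]
  exact sum_mem fun k _ => AddSubgroup.subset_closure ⟨_, _, rfl⟩

theorem coeff_swapXY (F : ℤ⟦X⟧⟦X⟧) (b : ℕ) :
    coeff b (swapXY F) = mk fun j => coeff b (coeff j F) := by
  simp [swapXY]

theorem eq_of_three_mul_four_pow_near {s t D : ℕ} (hD : D < s) (h₁ : 3 * 4 ^ t ≤ 3 * 4 ^ s + D)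
    (h₂ : 3 * 4 ^ s ≤ 3 * 4 ^ t + D) : t = s := by
  have hs : s < 4 ^ s := Nat.lt_pow_self (by norm_num)
  rcases lt_trichotomy t s with h | h | h
  · have : 4 ^ (t + 1) ≤ 4 ^ s := Nat.pow_le_pow_right (by norm_num) h
    rw [pow_succ] at this
    omega
  · exact h
  · have : 4 ^ (s + 1) ≤ 4 ^ t := Nat.pow_le_pow_right (by norm_num) h
    rw [pow_succ] at this
    omega

namespace DivisibleSieve

open Classical in
def lacunary (R : Type*) [Semiring R] (k : ℕ) : R⟦X⟧ :=
  mk fun a => if ∃ s, a = 3 * 4 ^ Nat.pair k s then 1 else 0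

theorem map_lacunary {R S : Type*} [Semiring R] [Semiring S] (f : R →+* S) (k : ℕ) :
    map f (lacunary R k) = lacunary S k := by
  ext a
  simp only [lacunary, coeff_map, coeff_mk]
  split_ifs <;> simp

theorem coeff_lacunary_eq_zero {R : Type*} [Semiring R] {a : ℕ} (ha : ∀ s, a ≠ 3 * 4 ^ s)
    (k : ℕ) : coeff a (lacunary R k) = 0 := by
  simp only [lacunary, coeff_mk, ite_eq_right_iff]
  exact fun ⟨s, hs⟩ => absurd hs (ha _)

theorem linearIndependent_smul_lacunary {R ι : Type*} [CommRing R] [NoZeroDivisors R]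
    [Fintype ι] {c : R} (hc : c ≠ 0) {κ : ι → ℕ} (hκ : Function.Injective κ) :
    LinearIndependent R[X] fun i => c • lacunary R (κ i) := by
  classical
  refine linearIndependent_polynomial_of_isolated_coeff _ fun i D =>
    ⟨3 * 4 ^ Nat.pair (κ i) (D + 1), ?_, fun j n h₁ h₂ hn => ?_⟩
  · simpa [lacunary] using hc
  · obtain ⟨s, rfl⟩ : ∃ s, n = 3 * 4 ^ Nat.pair (κ j) s := by
      by_contra h
      simp [lacunary, h] at hn
    have hD : D < Nat.pair (κ i) (D + 1) := Nat.lt_of_lt_of_le (by omega) (Nat.right_le_pair _ _)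
    have hpair := eq_of_three_mul_four_pow_near hD h₁ h₂
    obtain ⟨hκij, -⟩ := Nat.pair_eq_pair.mp hpair
    exact ⟨hκ hκij, by rw [hpair]⟩

def blockStart (p d : ℕ) : ℕ := 4 ^ (Nat.pair p d + 2)

/-- Inverts `blockStart` on each block `[blockStart p d, 2 * blockStart p d)`. -/
def blockOf (b : ℕ) : ℕ × ℕ := Nat.unpair (Nat.log 4 b - 2)

def columnIndex (b : ℕ) : ℕ := (b - blockStart (blockOf b).1 (blockOf b).2) / (blockOf b).2

def IsColumn (b : ℕ) : Prop := ∃ p d l, p ≤ d ∧ 1 ≤ l ∧ l ≤ p ∧ b = blockStart p d + l * d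

theorem mul_add_lt_blockStart {p d l i : ℕ} (hl : l ≤ p) (hi : i ≤ d) :
    l * d + i < blockStart p d := by
  set t := Nat.pair p d
  have hsq : (t + 1) * (t + 1) < 4 ^ (t + 1) := by
    have h := Nat.lt_pow_self (n := t + 1) (a := 2) (by norm_num)
    calc (t + 1) * (t + 1) < 2 ^ (t + 1) * 2 ^ (t + 1) := Nat.mul_lt_mul'' h h
      _ = 4 ^ (t + 1) := by rw [← mul_pow]; norm_num
  have hld : l * d ≤ t * t := Nat.mul_le_mul (hl.trans (Nat.left_le_pair p d))
    (Nat.right_le_pair p d)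
  have hdt : d ≤ t := Nat.right_le_pair p d
  have : 4 ^ (t + 1) ≤ 4 ^ (t + 2) := Nat.pow_le_pow_right (by norm_num) (by omega)
  unfold blockStart
  nlinarith

theorem blockOf_blockStart_add {p d z : ℕ} (hz : z < blockStart p d) :
    blockOf (blockStart p d + z) = (p, d) := by
  have hlog : Nat.log 4 (blockStart p d + z) = Nat.pair p d + 2 := by
    refine Nat.log_eq_of_pow_le_of_lt_pow (Nat.le_add_right _ _) ?_
    have h4 : 4 ^ (Nat.pair p d + 2 + 1) = 4 * 4 ^ (Nat.pair p d + 2) := pow_succ' _ _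
    unfold blockStart at hz ⊢
    omega
  simp [blockOf, hlog]

theorem blockStart_add_ne_three_mul_four_pow {p d z : ℕ} (hz : z < blockStart p d) (s : ℕ) :
    blockStart p d + z ≠ 3 * 4 ^ s := by
  unfold blockStart at hz ⊢
  intro h
  rcases le_or_gt s (Nat.pair p d + 1) with hs | hs
  · have : 4 ^ s ≤ 4 ^ (Nat.pair p d + 1) := Nat.pow_le_pow_right (by norm_num) hs
    have h4 : 4 ^ (Nat.pair p d + 2) = 4 * 4 ^ (Nat.pair p d + 1) := pow_succ' _ _
    omega
  · have : 4 ^ (Nat.pair p d + 2) ≤ 4 ^ s := Nat.pow_le_pow_right (by norm_num) hs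
    omega

theorem columnIndex_blockStart_add_mul {p d l : ℕ} (hl : l ≤ p) (hd : 0 < d) :
    columnIndex (blockStart p d + l * d) = l := by
  rw [columnIndex,
    blockOf_blockStart_add (by simpa using mul_add_lt_blockStart hl (Nat.zero_le d)),
    Nat.add_sub_cancel_left, Nat.mul_div_cancel _ hd]

theorem IsColumn.columnIndex_le {b : ℕ} (hb : IsColumn b) : columnIndex b ≤ (blockOf b).1 := by
  obtain ⟨p, d, l, hpd, hl1, hlp, rfl⟩ := hb
  rw [columnIndex_blockStart_add_mul hlp (by omega),
    blockOf_blockStart_add (by simpa using mul_add_lt_blockStart hlp (Nat.zero_le d))]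
  exact hlp

theorem not_isColumn_blockStart_add {p d l i : ℕ} (hl : l ≤ p) (hi₁ : 1 ≤ i) (hi₂ : i < d) :
    ¬ IsColumn (blockStart p d + (l * d + i)) := by
  rintro ⟨p', d', l', -, -, hl', h⟩
  have h' := congrArg blockOf h
  rw [blockOf_blockStart_add (mul_add_lt_blockStart hl hi₂.le),
    blockOf_blockStart_add (by simpa using mul_add_lt_blockStart hl' (Nat.zero_le d'))] at h'
  obtain ⟨rfl, rfl⟩ := Prod.ext_iff.mp h'
  have hdvd : d ∣ i := (Nat.dvd_add_right (dvd_mul_left d l)).mp ⟨l', by linarith⟩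
  exact absurd (Nat.le_of_dvd (by omega) hdvd) (by omega)

open Classical in
def weight (b : ℕ) : ℤ := if IsColumn b then ((blockOf b).1 - 1).factorial else 0

/-- Column `blockStart p d + l * d` carries the series `(p - 1)! • lacunary (Nat.pair p l)`. -/
def label (b : ℕ) : ℕ := Nat.pair (blockOf b).1 (columnIndex b)

def sieveSeries : ℤ⟦X⟧⟦X⟧ := mk fun b => weight b • lacunary ℤ (label b)

/-- For `q < p` we have `q ∣ (p - 1)!`, so only the columns with `p ≤ q` survive modulo `q`. -/
theorem label_lt_of_weight_emod_ne_zero {q b : ℕ} (hq : 0 < q) (hb : weight b % q ≠ 0) :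
    label b < (q + 1) ^ 2 := by
  by_cases hcol : IsColumn b
  · have hpq : (blockOf b).1 ≤ q := by
      by_contra! h
      have : (q : ℤ) ∣ ((blockOf b).1 - 1).factorial :=
        Int.natCast_dvd_natCast.mpr (Nat.dvd_factorial hq (by omega))
      exact hb (by simpa [weight, hcol] using Int.emod_eq_zero_of_dvd this)
    calc label b < (max (blockOf b).1 (columnIndex b) + 1) ^ 2 := Nat.pair_lt_max_add_one_sq _ _
      _ ≤ (q + 1) ^ 2 := by gcongr; exact max_le hpq (hcol.columnIndex_le.trans hpq)
  · simp [weight, hcol] at hb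

theorem exists_sub_nsmul_sieveSeries_mem_finiteRank {q : ℕ} (hq : 0 < q) :
    ∃ G, sieveSeries - q • G ∈ finiteRank := by
  refine ⟨mk fun b => (weight b / q) • lacunary ℤ (label b), ?_⟩
  have : sieveSeries - q • mk (fun b => (weight b / q) • lacunary ℤ (label b)) =
      mk fun b => (weight b % q) • lacunary ℤ (label b) := by
    ext1 b
    simp only [sieveSeries, map_sub, map_nsmul, coeff_mk, Int.emod_def, sub_smul, mul_smul,
      natCast_zsmul]
  rw [this]
  exact mk_smul_mem_finiteRank _ _ _ (range ((q + 1) ^ 2))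
    fun b hb => mem_range.mpr (label_lt_of_weight_emod_ne_zero hq hb)

theorem coeff_swapXY_sieveSeries_eq_zero {b : ℕ} (hb : ∀ s, b ≠ 3 * 4 ^ s) :
    coeff b (swapXY sieveSeries) = 0 := by
  ext j
  simp only [coeff_swapXY, sieveSeries, coeff_mk, map_zsmul, coeff_lacunary_eq_zero hb,
    smul_zero, map_zero]

theorem coeff_modP (p : ℕ) [Fact p.Prime] (F : ℤ⟦X⟧⟦X⟧) (b : ℕ) :
    coeff b (modP p F) =
      HahnSeries.ofPowerSeries ℤ (ZMod p) (map (Int.castRingHom (ZMod p)) (coeff b F)) :=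
  coeff_map _ _ _

theorem hasSieve_sieveSeries (p : ℕ) [hp : Fact p.Prime] {d : ℕ} (hpd : p ≤ d) :
    HasSieve (RatFunc (ZMod p)) (LaurentSeries (ZMod p)) p d
      (modP p (sieveSeries - swapXY sieveSeries)) := by
  have hd : 2 ≤ d := hp.out.two_le.trans hpd
  have coeff_block : ∀ {z}, z < blockStart p d →
      coeff (blockStart p d + z) (modP p (sieveSeries - swapXY sieveSeries)) =
        HahnSeries.ofPowerSeries ℤ (ZMod p) (map (Int.castRingHom (ZMod p))
          (weight (blockStart p d + z) • lacunary ℤ (label (blockStart p d + z)))) := by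
    intro z hz
    rw [coeff_modP, map_sub,
      coeff_swapXY_sieveSeries_eq_zero (blockStart_add_ne_three_mul_four_pow hz), sub_zero]
    simp [sieveSeries]
  refine ⟨blockStart p d, fun l hl i hi₁ hi₂ => ?_, ?_⟩
  · rw [add_assoc, coeff_block (mul_add_lt_blockStart hl (by omega)), weight,
      if_neg (not_isColumn_blockStart_add hl hi₁ (by omega))]
    simp
  · have hcol : ∀ l : Fin p,
        coeff (blockStart p d + (l + 1) * d) (modP p (sieveSeries - swapXY sieveSeries)) =
          HahnSeries.ofPowerSeries ℤ (ZMod p)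
            ((((p - 1).factorial : ℤ) : ZMod p) • lacunary (ZMod p) (Nat.pair p (l + 1))) := by
      intro l
      have hl : (l : ℕ) + 1 ≤ p := l.isLt
      have hz := mul_add_lt_blockStart (i := 0) hl (Nat.zero_le d)
      rw [add_zero] at hz
      rw [coeff_block hz, weight, if_pos ⟨p, d, l + 1, hpd, by omega, hl, rfl⟩, label,
        columnIndex_blockStart_add_mul hl (by omega), blockOf_blockStart_add hz, map_zsmul,
        map_lacunary, ← Int.cast_smul_eq_zsmul (ZMod p)]
    simp_rw [hcol]
    refine linearIndependent_ratFunc_of_polynomial (linearIndependent_smul_lacunary ?_ ?_)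
    · rw [Int.cast_natCast, ZMod.wilsons_lemma]
      exact neg_ne_zero.mpr one_ne_zero
    · exact fun l l' h => Fin.ext (by simpa using h)

end DivisibleSieve

/-- **Lemma 3.8.** There is a power series `F ∈ ℤ⟦x,y⟧` whose class in
`ℤ⟦x,y⟧/(ℤ⟦x⟧·ℤ⟦y⟧)` is divisible by every prime, and such that for every prime `p` and
every `d ≥ p` the reduction of `F(x,y) − F(y,x)` modulo `p`, viewed in `(𝔽_p⸨x⸩)⟦y⟧`, has a
`p,d`-sieve with respect to `K = 𝔽_p(x)`. -/
theorem exists_divisible_series_with_sieve :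
    ∃ F : PowerSeries (PowerSeries ℤ),
      (∀ p : ℕ, p.Prime → ∃ G : PowerSeries (PowerSeries ℤ), F - p • G ∈ finiteRank) ∧
      (∀ (p : ℕ) [Fact p.Prime], ∀ d : ℕ, p ≤ d →
        HasSieve (RatFunc (ZMod p)) (LaurentSeries (ZMod p)) p d
          (modP p (F - swapXY F))) :=
  ⟨DivisibleSieve.sieveSeries,
    fun _ hp => DivisibleSieve.exists_sub_nsmul_sieveSeries_mem_finiteRank hp.pos,
    fun p _ _ hpd => DivisibleSieve.hasSieve_sieveSeries p hpd⟩
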